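/- Let (X,d,μ) satisfy ε-BM(n−1,n) with ε ≥ 0 and n ∈ (1,∞). Let A, B be nonempty Borel sets in X with d(A,B) ≥ r for some r ∈ (0, π), and suppose μ(A) ≥ 1/2. Then μ(B) ≤ 2·(cos(r/2))^{2(n−1)}. -/

import Mathlib

open MeasureTheory ENNReal

/-- The set of `ε`-approximated `t`-intermediate points between `A₀` and `A₁`. -/
def interSet {X : Type*} [PseudoMetricSpace X] (ε t : ℝ) (A₀ A₁ : Set X) : Set X :=
  {x | ∃ x₀ ∈ A₀, ∃ x₁ ∈ A₁,
    |dist x₀ x - t * dist x₀ x₁| ≤ ε ∧ |dist x x₁ - (1 - t) * dist x₀ x₁| ≤ ε}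

/-- The sine distortion coefficient `(sin(t·d)/(t·sin d))^{(n-1)/n}`, set to `+∞` when `d ≥ π`. -/
noncomputable def distCoef (n t d : ℝ) : ℝ≥0∞ :=
  if d < Real.pi then
    ENNReal.ofReal ((Real.sin (t * d) / (t * Real.sin d)) ^ ((n - 1) / n))
  else ⊤

/-- The `ε`-approximated Brunn–Minkowski inequality `ε-BM(n-1, n)`. -/
def BMCond {X : Type*} [PseudoMetricSpace X] [MeasurableSpace X]
    (μ : Measure X) (ε n : ℝ) : Prop :=
  ∀ A₀ A₁ : Set X, MeasurableSet A₀ → MeasurableSet A₁ → A₀.Nonempty → A₁.Nonempty →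
    ∀ t ∈ Set.Ioo (0 : ℝ) 1,
      ENNReal.ofReal (1 - t) * (⨅ x₀ ∈ A₀, ⨅ x₁ ∈ A₁, distCoef n (1 - t) (dist x₀ x₁)) *
          μ A₀ ^ (1 / n)
        + ENNReal.ofReal t * (⨅ x₀ ∈ A₀, ⨅ x₁ ∈ A₁, distCoef n t (dist x₀ x₁)) *
          μ A₁ ^ (1 / n)
      ≤ μ (interSet ε t A₀ A₁) ^ (1 / n)

/-- The concentration function `α(r) = sup {1 - μ(A_r) : μ(A) ≥ 1/2}`. -/
noncomputable def concFn {X : Type*} [PseudoMetricSpace X] [MeasurableSpace X]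
    (μ : Measure X) (r : ℝ) : ℝ :=
  sSup {v : ℝ | ∃ A : Set X, MeasurableSet A ∧ 1 / 2 ≤ μ A ∧
    v = 1 - (μ (Metric.thickening r A)).toReal}

/-! Apply `ε-BM(n-1, n)` at `t = 1/2`. For `d < π` the distortion coefficient is
`sin (d/2) / ((1/2) sin d) = 1 / cos (d/2)`, which is at least `1 / cos (r/2)` once `d ≥ r`; as the
intermediate set has measure at most `1`, this gives `μ(A)^{1/n} + μ(B)^{1/n} ≤ 2 cos (r/2)^{(n-1)/n}`.
AM–GM turns this into `μ(A) μ(B) ≤ cos (r/2)^{2(n-1)}`, and `μ(A) ≥ 1/2` finishes. -/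

section

open Real

theorem le_two_mul_rpow_of_rpow_add_rpow_le {n a b c : ℝ} (hn : 0 < n) (ha : 1 / 2 ≤ a)
    (hb : 0 ≤ b) (hc : 0 ≤ c) (h : a ^ (1 / n) + b ^ (1 / n) ≤ 2 * c ^ ((n - 1) / n)) :
    b ≤ 2 * c ^ (2 * (n - 1)) := by
  have ha0 : 0 ≤ a := by linarith
  set u := a ^ (1 / n)
  set v := b ^ (1 / n)
  have hu : 0 ≤ u := rpow_nonneg ha0 _
  have hv : 0 ≤ v := rpow_nonneg hb _
  have hamgm : u * v ≤ (c ^ ((n - 1) / n)) ^ (2 : ℕ) := by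
    nlinarith [sq_nonneg (u - v)]
  have hab : a * b = (u * v) ^ n := by
    rw [← mul_rpow ha0 hb, one_div, rpow_inv_rpow (mul_nonneg ha0 hb) hn.ne']
  have hprod : a * b ≤ c ^ (2 * (n - 1)) := by
    calc a * b = (u * v) ^ n := hab
      _ ≤ ((c ^ ((n - 1) / n)) ^ (2 : ℕ)) ^ n := by gcongr
      _ = c ^ (2 * (n - 1)) := by
        rw [← rpow_mul_natCast hc, ← rpow_mul hc]
        congr 1
        push_cast
        field_simp
  nlinarith

theorem distCoef_half_of_pos_of_lt_pi (n : ℝ) {d : ℝ} (hd : 0 < d) (hdπ : d < π) :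
    distCoef n (1 / 2) d = ENNReal.ofReal (cos (d / 2) ^ ((n - 1) / n))⁻¹ := by
  have hsin : 0 < sin (d / 2) := sin_pos_of_pos_of_lt_pi (by linarith) (by linarith)
  have hcos : 0 < cos (d / 2) := cos_pos_of_mem_Ioo ⟨by linarith, by linarith⟩
  have hratio : sin (1 / 2 * d) / (1 / 2 * sin d) = (cos (d / 2))⁻¹ := by
    rw [show d = 2 * (d / 2) by ring, sin_two_mul]
    field_simp
  rw [distCoef, if_pos hdπ, hratio, inv_rpow hcos.le]

theorem ofReal_inv_cos_half_rpow_le_distCoef_half {n r d : ℝ} (hn : 1 ≤ n) (hr : 0 < r)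
    (hrπ : r < π) (hrd : r ≤ d) :
    ENNReal.ofReal (cos (r / 2) ^ ((n - 1) / n))⁻¹ ≤ distCoef n (1 / 2) d := by
  rcases lt_or_ge d π with hdπ | hdπ
  · rw [distCoef_half_of_pos_of_lt_pi n (hr.trans_le hrd) hdπ]
    have hcos : 0 < cos (d / 2) := cos_pos_of_mem_Ioo ⟨by linarith, by linarith⟩
    have hp : 0 ≤ (n - 1) / n := div_nonneg (by linarith) (by linarith)
    gcongr
    exact cos_le_cos_of_nonneg_of_le_pi (by linarith) (by linarith) (by linarith)
  · simp [distCoef, not_lt.mpr hdπ]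

theorem BMCond.half_mul_add_le {X : Type*} [PseudoMetricSpace X] [MeasurableSpace X]
    {μ : Measure X} {ε n : ℝ} (hBM : BMCond μ ε n) {A B : Set X} (hA : MeasurableSet A)
    (hB : MeasurableSet B) (hAne : A.Nonempty) (hBne : B.Nonempty) {κ : ℝ≥0∞}
    (hκ : ∀ x ∈ A, ∀ y ∈ B, κ ≤ distCoef n (1 / 2) (dist x y)) :
    ENNReal.ofReal (1 / 2) * κ * (μ A ^ (1 / n) + μ B ^ (1 / n))
      ≤ μ (interSet ε (1 / 2) A B) ^ (1 / n) := by
  have hinf : κ ≤ ⨅ x ∈ A, ⨅ y ∈ B, distCoef n (1 / 2) (dist x y) :=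
    le_iInf₂ fun x hx => le_iInf₂ fun y hy => hκ x hx y hy
  have h := hBM A B hA hB hAne hBne (1 / 2) ⟨by norm_num, by norm_num⟩
  rw [show (1 : ℝ) - 1 / 2 = 1 / 2 by norm_num] at h
  calc ENNReal.ofReal (1 / 2) * κ * (μ A ^ (1 / n) + μ B ^ (1 / n))
      = ENNReal.ofReal (1 / 2) * κ * μ A ^ (1 / n)
        + ENNReal.ofReal (1 / 2) * κ * μ B ^ (1 / n) := mul_add _ _ _
    _ ≤ _ := le_trans (by gcongr) h

end

theorem measure_bound_general (X : Type*) [MetricSpace X] [MeasurableSpace X]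
    (μ : Measure X) [IsProbabilityMeasure μ]
    (ε n : ℝ) (hn : 1 < n) (hBM : BMCond μ ε n)
    (A B : Set X) (hA : MeasurableSet A) (hB : MeasurableSet B)
    (hAne : A.Nonempty) (hBne : B.Nonempty)
    (r : ℝ) (hr : r ∈ Set.Ioo 0 Real.pi)
    (hdist : ∀ x ∈ A, ∀ y ∈ B, r ≤ dist x y)
    (hAhalf : 1 / 2 ≤ μ A) :
    μ B ≤ ENNReal.ofReal (2 * Real.cos (r / 2) ^ (2 * (n - 1))) := by
  obtain ⟨hr0, hrπ⟩ := hr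
  have hn0 : 0 < n := by linarith
  set c := Real.cos (r / 2)
  have hc : 0 < c := Real.cos_pos_of_mem_Ioo ⟨by linarith, by linarith⟩
  have hmid := hBM.half_mul_add_le hA hB hAne hBne fun x hx y hy =>
    ofReal_inv_cos_half_rpow_le_distCoef_half hn.le hr0 hrπ (hdist x hx y hy)
  have hsum : μ.real A ^ (1 / n) + μ.real B ^ (1 / n) ≤ 2 * c ^ ((n - 1) / n) := by
    have h := hmid.trans (ENNReal.rpow_le_one prob_le_one (by positivity))
    rw [← ofReal_measureReal (μ := μ) (s := A), ← ofReal_measureReal (μ := μ) (s := B),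
      ENNReal.ofReal_rpow_of_nonneg measureReal_nonneg (by positivity),
      ENNReal.ofReal_rpow_of_nonneg measureReal_nonneg (by positivity),
      ← ENNReal.ofReal_add (by positivity) (by positivity), ← ENNReal.ofReal_mul (by norm_num),
      ← ENNReal.ofReal_mul (by positivity), ENNReal.ofReal_le_one, mul_comm (1 / 2 : ℝ),
      mul_assoc, inv_mul_le_iff₀ (Real.rpow_pos_of_pos hc _)] at h
    linarith
  have hAhalf' : 1 / 2 ≤ μ.real A := by
    simpa [measureReal_def] using ENNReal.toReal_mono (measure_ne_top μ A) hAhalf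
  rw [← ofReal_measureReal (μ := μ) (s := B)]
  exact ENNReal.ofReal_le_ofReal
    (le_two_mul_rpow_of_rpow_add_rpow_le hn0 hAhalf' measureReal_nonneg hc.le hsum)

theorem measure_bound (X : Type*) [MetricSpace X] [CompleteSpace X]
    [TopologicalSpace.SeparableSpace X] [MeasurableSpace X] [BorelSpace X]
    (μ : Measure X) [IsProbabilityMeasure μ] [μ.IsOpenPosMeasure]
    (ε n : ℝ) (hε : 0 ≤ ε) (hn : 1 < n) (hBM : BMCond μ ε n)
    (A B : Set X) (hA : MeasurableSet A) (hB : MeasurableSet B)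
    (hAne : A.Nonempty) (hBne : B.Nonempty)
    (r : ℝ) (hr : r ∈ Set.Ioo 0 Real.pi)
    (hdist : ∀ x ∈ A, ∀ y ∈ B, r ≤ dist x y)
    (hAhalf : 1 / 2 ≤ μ A) :
    μ B ≤ ENNReal.ofReal (2 * Real.cos (r / 2) ^ (2 * (n - 1))) :=
  measure_bound_general X μ ε n hn hBM A B hA hB hAne hBne r hr hdist hAhalf
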